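/- arXiv:2204.09020 — 2 statements merged into one kernel-verified Lean document; each statement's English description precedes it below -/
import Mathlib

section
/- Let S¹ = {x ∈ ℝ² : ‖x‖ = 1} be the unit circle in the Euclidean plane, let v ∈ ℝ² be a unit vector, and let t ∈ ℝ. Then the sublevel set S¹_{v,t} = {x ∈ S¹ : ⟨x, v⟩ ≤ t} is nonempty if and only if t ≥ −1, and whenever t ≥ −1 it is connected. Moreover, S¹_{v,t} = S¹ if and only if t ≥ 1. -/
open Set Metric RealInnerProductSpace

private lemma inner_two (x y : EuclideanSpace ℝ (Fin 2)) :
    ⟪x, y⟫ = x 0 * y 0 + x 1 * y 1 := by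
  simp [PiLp.inner_apply, Fin.sum_univ_two]; ring

private lemma norm_sq_two (x : EuclideanSpace ℝ (Fin 2)) : x 0 ^ 2 + x 1 ^ 2 = ‖x‖ ^ 2 := by
  rw [EuclideanSpace.norm_eq, Real.sq_sqrt (by positivity), Fin.sum_univ_two]
  simp [sq_abs]

private lemma norm_eq_one_two {x : EuclideanSpace ℝ (Fin 2)} (h : x 0 ^ 2 + x 1 ^ 2 = 1) :
    ‖x‖ = 1 := by
  have := norm_sq_two x
  nlinarith [norm_nonneg x]

private lemma arccos_anti {x y : ℝ} (hxy : x ≤ y) :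
    Real.arccos y ≤ Real.arccos x := by
  unfold Real.arccos
  have := Real.monotone_arcsin hxy
  linarith

private lemma cos_le_on_interval {t θ : ℝ} (ht : -1 ≤ t)
    (h : θ ∈ Icc (Real.arccos t) (2 * Real.pi - Real.arccos t)) : Real.cos θ ≤ t := by
  rcases le_or_gt t 1 with ht1 | ht1
  · have hca : Real.cos (Real.arccos t) = t := Real.cos_arccos ht ht1
    rcases le_or_gt θ Real.pi with hθ | hθ
    · calc Real.cos θ ≤ Real.cos (Real.arccos t) :=
            Real.cos_le_cos_of_nonneg_of_le_pi (Real.arccos_nonneg t) hθ h.1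
        _ = t := hca
    · rw [← Real.cos_two_pi_sub θ]
      calc Real.cos (2 * Real.pi - θ) ≤ Real.cos (Real.arccos t) :=
            Real.cos_le_cos_of_nonneg_of_le_pi (Real.arccos_nonneg t) (by linarith)
              (by linarith [h.2])
        _ = t := hca
  · linarith [Real.cos_le_one θ]

/-- For the unit circle `S¹ ⊆ ℝ²`, a unit direction `v` and a height `t`, the sublevel
set `S¹_{v,t} = {x ∈ S¹ : ⟪x,v⟫ ≤ t}` is nonempty iff `t ≥ −1`, is connected whenever
`t ≥ −1`, and equals all of `S¹` iff `t ≥ 1`.  (This encodes `PHT⁰(S¹)`.) -/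
theorem circle_sublevel_connected (v : EuclideanSpace ℝ (Fin 2)) (hv : ‖v‖ = 1) (t : ℝ) :
    ({x ∈ Metric.sphere (0 : EuclideanSpace ℝ (Fin 2)) 1 | ⟪x, v⟫ ≤ t}.Nonempty ↔ -1 ≤ t) ∧
    (-1 ≤ t → IsConnected {x ∈ Metric.sphere (0 : EuclideanSpace ℝ (Fin 2)) 1 | ⟪x, v⟫ ≤ t}) ∧
    ({x ∈ Metric.sphere (0 : EuclideanSpace ℝ (Fin 2)) 1 | ⟪x, v⟫ ≤ t} =
        Metric.sphere (0 : EuclideanSpace ℝ (Fin 2)) 1 ↔ 1 ≤ t) := by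
  have hv2 : v 0 ^ 2 + v 1 ^ 2 = 1 := by rw [norm_sq_two, hv]; norm_num
  have hvv : ⟪v, v⟫ = 1 := by rw [inner_two]; nlinarith
  refine ⟨?_, ?_, ?_⟩
  · constructor
    · rintro ⟨x, hx, hxt⟩
      have hx1 : ‖x‖ = 1 := by simpa using hx
      have h1 := abs_real_inner_le_norm x v
      rw [hx1, hv, one_mul] at h1
      have h2 := (abs_le.mp h1).1
      linarith
    · intro ht
      refine ⟨-v, ?_, ?_⟩
      · simp [mem_sphere_zero_iff_norm, hv]
      · rw [inner_neg_left, hvv]; linarith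
  · intro ht
    set a := Real.arccos t with ha
    set f : ℝ → EuclideanSpace ℝ (Fin 2) := fun θ =>
      (WithLp.equiv 2 (Fin 2 → ℝ)).symm
        ![Real.cos θ * v 0 - Real.sin θ * v 1, Real.cos θ * v 1 + Real.sin θ * v 0] with hf
    have hf0 : ∀ θ, f θ 0 = Real.cos θ * v 0 - Real.sin θ * v 1 := fun θ => rfl
    have hf1 : ∀ θ, f θ 1 = Real.cos θ * v 1 + Real.sin θ * v 0 := fun θ => rfl
    have hfc : Continuous f := by
      apply (PiLp.continuous_toLp (p := 2) (β := fun _ : Fin 2 => ℝ)).comp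
      apply continuous_pi
      intro i
      fin_cases i <;> simp <;> fun_prop
    have ha0 : 0 ≤ a := Real.arccos_nonneg t
    have haπ : a ≤ Real.pi := Real.arccos_le_pi t
    have key : {x ∈ Metric.sphere (0 : EuclideanSpace ℝ (Fin 2)) 1 | ⟪x, v⟫ ≤ t} =
        f '' Icc a (2 * Real.pi - a) := by
      ext x
      constructor
      · rintro ⟨hx, hxt⟩
        have hx1 : ‖x‖ = 1 := by simpa using hx
        set p : ℝ := x 0 * v 0 + x 1 * v 1 with hp
        set b : ℝ := x 1 * v 0 - x 0 * v 1 with hb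
        have hx2 : x 0 ^ 2 + x 1 ^ 2 = 1 := by rw [norm_sq_two, hx1]; norm_num
        have hpb : p ^ 2 + b ^ 2 = 1 := by rw [hp, hb]; nlinarith
        have hpt : p ≤ t := by rw [hp, ← inner_two]; exact hxt
        have hp1 : -1 ≤ p := by nlinarith
        have hp1' : p ≤ 1 := by nlinarith
        have hsq : Real.sqrt (1 - p ^ 2) = |b| := by
          rw [show (1 : ℝ) - p ^ 2 = b ^ 2 by linarith, Real.sqrt_sq_eq_abs]
        have hc : Real.cos (Real.arccos p) = p := Real.cos_arccos hp1 hp1'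
        rcases le_or_gt 0 b with hb0 | hb0
        · refine ⟨Real.arccos p, ⟨arccos_anti hpt, ?_⟩, ?_⟩
          · linarith [Real.arccos_le_pi p]
          · have hs : Real.sin (Real.arccos p) = b := by
              rw [Real.sin_arccos, hsq, abs_of_nonneg hb0]
            ext i
            fin_cases i
            · show f _ 0 = x 0
              rw [hf0, hc, hs]; linear_combination (x 0) * hv2
            · show f _ 1 = x 1
              rw [hf1, hc, hs]; linear_combination (x 1) * hv2
        · refine ⟨2 * Real.pi - Real.arccos p, ⟨?_, ?_⟩, ?_⟩
          · linarith [Real.arccos_le_pi p]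
          · have := arccos_anti hpt; linarith
          · have hc2 : Real.cos (2 * Real.pi - Real.arccos p) = p := by
              rw [Real.cos_two_pi_sub, hc]
            have hs2 : Real.sin (2 * Real.pi - Real.arccos p) = b := by
              rw [Real.sin_two_pi_sub, Real.sin_arccos, hsq, abs_of_neg hb0]; ring
            ext i
            fin_cases i
            · show f _ 0 = x 0
              rw [hf0, hc2, hs2]; linear_combination (x 0) * hv2
            · show f _ 1 = x 1
              rw [hf1, hc2, hs2]; linear_combination (x 1) * hv2
      · rintro ⟨θ, hθ, rfl⟩
        have hsphere : f θ ∈ Metric.sphere (0 : EuclideanSpace ℝ (Fin 2)) 1 := by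
          rw [mem_sphere_zero_iff_norm]
          apply norm_eq_one_two
          rw [hf0, hf1]
          have h1 := Real.sin_sq_add_cos_sq θ
          nlinarith [h1, hv2]
        refine ⟨hsphere, ?_⟩
        have hinner : ⟪f θ, v⟫ = Real.cos θ := by
          rw [inner_two, hf0, hf1]; linear_combination Real.cos θ * hv2
        rw [hinner]
        exact cos_le_on_interval ht hθ
    rw [key]
    have hab : a ≤ 2 * Real.pi - a := by
      have := Real.pi_pos; linarith
    exact (isConnected_Icc hab).image f hfc.continuousOn
  · constructor
    · intro h
      have hvs : v ∈ Metric.sphere (0 : EuclideanSpace ℝ (Fin 2)) 1 := by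
        simp [mem_sphere_zero_iff_norm, hv]
      have : v ∈ {x ∈ Metric.sphere (0 : EuclideanSpace ℝ (Fin 2)) 1 | ⟪x, v⟫ ≤ t} := by
        rw [h]; exact hvs
      have := this.2
      rwa [hvv] at this
    · intro ht
      apply Set.eq_of_subset_of_subset (fun x hx => hx.1)
      intro x hx
      refine ⟨hx, ?_⟩
      have hx1 : ‖x‖ = 1 := by simpa using hx
      have := real_inner_le_norm x v
      rw [hx1, hv, one_mul] at this
      linarith
end

section
/- Let S¹ = {x ∈ ℝ² : ‖x‖ = 1} be the unit circle and let A = {x ∈ S¹ : x₁ ≤ 0} be the closed left half-circle. Then for every unit vector v ∈ ℝ² and every t ∈ ℝ, the sublevel set A_{v,t} = {x ∈ A : ⟨x, v⟩ ≤ t} can be written as the union of at most two connected pieces: there exist sets C₁, C₂ ⊆ ℝ², each of which is preconnected, with A_{v,t} = C₁ ∪ C₂. -/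
open Set Metric RealInnerProductSpace Real

lemma cos_le_max' (k : ℤ) (a b c : ℝ) (h1 : k*π ≤ a) (h2 : a ≤ b) (h3 : b ≤ c)
    (h4 : c ≤ (k+1)*π) : Real.cos b ≤ max (Real.cos a) (Real.cos c) := by
  have hcast : ∀ x : ℝ, ((k+1:ℤ):ℝ) * π - x = (k+1)*π - x := by intro x; push_cast; ring
  have hua : (k+1)*π - a ≤ π := by linarith
  have huc : 0 ≤ (k+1)*π - c := by linarith
  rcases Int.even_or_odd (k+1) with he | ho
  · have h : ∀ x : ℝ, Real.cos ((k+1)*π - x) = Real.cos x := by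
      intro x
      rw [← hcast, Real.cos_int_mul_pi_sub, he.neg_one_zpow, one_mul]
    have hb : Real.cos b = Real.cos ((k+1)*π - b) := (h b).symm
    have hc : Real.cos c = Real.cos ((k+1)*π - c) := (h c).symm
    rw [hb, hc] at *
    refine le_max_of_le_right (Real.cos_le_cos_of_nonneg_of_le_pi huc (by linarith) (by linarith))
  · have h : ∀ x : ℝ, Real.cos ((k+1)*π - x) = -Real.cos x := by
      intro x
      rw [← hcast, Real.cos_int_mul_pi_sub, ho.neg_one_zpow, neg_one_mul]
    have hb : Real.cos b = -Real.cos ((k+1)*π - b) := by rw [h b, neg_neg]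
    have ha : Real.cos a = -Real.cos ((k+1)*π - a) := by rw [h a, neg_neg]
    rw [hb, ha]
    refine le_max_of_le_left (neg_le_neg ?_)
    exact Real.cos_le_cos_of_nonneg_of_le_pi (by linarith) hua (by linarith)

noncomputable def circMap (θ : ℝ) : EuclideanSpace ℝ (Fin 2) :=
  (WithLp.equiv 2 (Fin 2 → ℝ)).symm ![Real.cos θ, Real.sin θ]

lemma circMap_zero (θ : ℝ) : circMap θ 0 = Real.cos θ := rfl
lemma circMap_one (θ : ℝ) : circMap θ 1 = Real.sin θ := rfl

lemma circMap_continuous : Continuous circMap := by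
  have h2 : Continuous (fun θ => ![Real.cos θ, Real.sin θ] : ℝ → (Fin 2 → ℝ)) := by
    apply continuous_pi
    intro i
    fin_cases i
    · exact Real.continuous_cos
    · exact Real.continuous_sin
  exact Continuous.comp (PiLp.continuous_toLp (p := 2) (β := fun _ : Fin 2 => ℝ)) h2

lemma circMap_mem_sphere (θ : ℝ) :
    circMap θ ∈ Metric.sphere (0 : EuclideanSpace ℝ (Fin 2)) 1 := by
  rw [mem_sphere_iff_norm, sub_zero, EuclideanSpace.norm_eq]
  rw [Fin.sum_univ_two, circMap_zero, circMap_one]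
  simp [Real.norm_eq_abs, sq_abs, Real.cos_sq_add_sin_sq]

lemma inner_circMap (θ φ : ℝ) : ⟪circMap θ, circMap φ⟫ = Real.cos (θ - φ) := by
  rw [Real.cos_sub]
  simp [PiLp.inner_apply, Fin.sum_univ_two, RCLike.inner_apply, circMap_zero, circMap_one,
    mul_comm]

lemma exists_angle (x : EuclideanSpace ℝ (Fin 2)) (h : ‖x‖ = 1) :
    ∃ ψ ∈ Set.Ioc (-π) π, circMap ψ = x := by
  set z : ℂ := ⟨x 0, x 1⟩ with hz
  have habs : ‖z‖ = 1 := by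
    rw [Complex.norm_def, Complex.normSq_mk]
    rw [EuclideanSpace.norm_eq, Fin.sum_univ_two] at h
    simpa [Real.norm_eq_abs, sq_abs, sq] using h
  have hz0 : z ≠ 0 := by
    intro h0; rw [h0] at habs; simp at habs
  refine ⟨Complex.arg z, Complex.arg_mem_Ioc z, ?_⟩
  have hc : Real.cos (Complex.arg z) = x 0 := by
    rw [Complex.cos_arg hz0, habs]; simp [hz]
  have hs : Real.sin (Complex.arg z) = x 1 := by
    rw [Complex.sin_arg, habs]; simp [hz]
  ext i
  fin_cases i
  · exact hc
  · exact hs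

/-- For the closed left half-circle `A = {x ∈ S¹ : x₁ ≤ 0}`, every directional sublevel
set `A_{v,t} = {x ∈ A : ⟪x,v⟫ ≤ t}` is a union of at most two preconnected pieces.
(This encodes the computation of `PHT⁰` of a half-circle cover element.) -/
theorem half_circle_sublevel_at_most_two_components
    (v : EuclideanSpace ℝ (Fin 2)) (hv : ‖v‖ = 1) (t : ℝ) :
    ∃ C₁ C₂ : Set (EuclideanSpace ℝ (Fin 2)),
      IsPreconnected C₁ ∧ IsPreconnected C₂ ∧
      {x ∈ {x ∈ Metric.sphere (0 : EuclideanSpace ℝ (Fin 2)) 1 | x 0 ≤ 0} | ⟪x, v⟫ ≤ t} =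
        C₁ ∪ C₂ := by
  obtain ⟨φ, hφmem, hφ⟩ := exists_angle v hv
  have hπ : (0:ℝ) < π := Real.pi_pos
  set k : ℤ := ⌈(π/2 - φ)/π⌉ with hk
  set c : ℝ := φ + k*π with hc
  have hk1 : π/2 - φ ≤ (k:ℝ)*π := by
    have := Int.le_ceil ((π/2 - φ)/π)
    calc π/2 - φ = (π/2 - φ)/π * π := by field_simp
    _ ≤ (k:ℝ)*π := by
        apply mul_le_mul_of_nonneg_right this hπ.le
  have hk2 : (k:ℝ)*π < π/2 - φ + π := by
    have h2 := Int.ceil_lt_add_one ((π/2 - φ)/π)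
    have := mul_lt_mul_of_pos_right h2 hπ
    calc (k:ℝ)*π < ((π/2 - φ)/π + 1) * π := this
    _ = π/2 - φ + π := by field_simp
  have hc1 : π/2 ≤ c := by rw [hc]; linarith
  have hc2 : c ≤ 3*π/2 := by rw [hc]; linarith
  -- preconnectedness helper
  have hpre : ∀ (a b : ℝ) (m : ℤ), (m:ℝ)*π ≤ a - φ → b - φ ≤ ((m:ℝ)+1)*π →
      IsPreconnected {θ ∈ Icc a b | Real.cos (θ - φ) ≤ t} := by
    intro a b m ha hb
    apply Set.OrdConnected.isPreconnected
    constructor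
    intro θ₁ h₁ θ₂ h₂ θ hθ
    refine ⟨⟨le_trans h₁.1.1 hθ.1, le_trans hθ.2 h₂.1.2⟩, ?_⟩
    have key := cos_le_max' m (θ₁ - φ) (θ - φ) (θ₂ - φ)
      (by linarith [h₁.1.1]) (by linarith [hθ.1]) (by linarith [hθ.2])
      (by push_cast; linarith [h₂.1.2])
    exact le_trans key (max_le h₁.2 h₂.2)
  refine ⟨circMap '' {θ ∈ Icc (π/2) c | Real.cos (θ - φ) ≤ t},
          circMap '' {θ ∈ Icc c (3*π/2) | Real.cos (θ - φ) ≤ t},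
          IsPreconnected.image ?_ _ circMap_continuous.continuousOn,
          IsPreconnected.image ?_ _ circMap_continuous.continuousOn, ?_⟩
  · apply hpre _ _ (k-1) <;> push_cast <;> linarith
  · apply hpre _ _ k
    · linarith
    · linarith
  · ext x
    simp only [mem_setOf_eq, mem_union, mem_image]
    constructor
    · rintro ⟨⟨hx1, hx2⟩, hx3⟩
      have hxn : ‖x‖ = 1 := by rwa [mem_sphere_iff_norm, sub_zero] at hx1
      obtain ⟨ψ, hψ, hxe⟩ := exists_angle x hxn
      have hcosψ : Real.cos ψ ≤ 0 := by rw [← circMap_zero ψ, hxe]; exact hx2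
      have hnot : ¬ (ψ ∈ Set.Ioo (-(π/2)) (π/2)) := by
        intro hmem
        exact absurd hcosψ (not_le.mpr (Real.cos_pos_of_mem_Ioo hmem))
      simp only [Set.mem_Ioo, not_and_or, not_lt] at hnot
      -- pick θ ∈ [π/2, 3π/2]
      obtain ⟨θ, hθmem, hθeq⟩ : ∃ θ, θ ∈ Icc (π/2) (3*π/2) ∧ circMap θ = x := by
        rcases hnot with h | h
        · refine ⟨ψ + 2*π, ⟨by linarith [hψ.1], by linarith [hψ.1, h]⟩, ?_⟩
          rw [← hxe]
          ext i; fin_cases i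
          · exact Real.cos_add_two_pi ψ
          · exact Real.sin_add_two_pi ψ
        · exact ⟨ψ, ⟨h, by linarith [hψ.2]⟩, hxe⟩
      have hcost : Real.cos (θ - φ) ≤ t := by
        rw [← inner_circMap θ φ, hφ, hθeq]; exact hx3
      rcases le_total θ c with h | h
      · exact Or.inl ⟨θ, ⟨⟨hθmem.1, h⟩, hcost⟩, hθeq⟩
      · exact Or.inr ⟨θ, ⟨⟨h, hθmem.2⟩, hcost⟩, hθeq⟩
    · rintro (⟨θ, ⟨⟨h1, h2⟩, hcos⟩, rfl⟩ | ⟨θ, ⟨⟨h1, h2⟩, hcos⟩, rfl⟩) <;>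
        refine ⟨⟨circMap_mem_sphere θ, ?_⟩, ?_⟩
      · exact Real.cos_nonpos_of_pi_div_two_le_of_le h1 (by linarith)
      · rw [← hφ, inner_circMap]; exact hcos
      · exact Real.cos_nonpos_of_pi_div_two_le_of_le (by linarith) (by linarith)
      · rw [← hφ, inner_circMap]; exact hcos
end
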